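/- Every Fréchet differentiable functional $g: C[0,T]\to\mathbb{R}$ is a pointwise limit of functionals belonging to the class $\mathcal{A}_T$. Specifically, the functionals $g^{(n)}(c) = g(R^{(n)}c)$ with $(R^{(n)}c)_t = e^{-n(T-t)}c_T + n\int_t^T e^{-n(s-t)}c_s\,ds$ belong to $\mathcal{A}_T$ and satisfy $g^{(n)}(c)\to g(c)$ for every $c\in C[0,T]$. -/

import Mathlib

open MeasureTheory Filter Set

/-- The sup norm `‖z‖ = sup_{s ∈ [0,T]} |z s|` of a path, as used on `C[0,T]`. -/
noncomputable def supNorm (T : ℝ) (z : ℝ → ℝ) : ℝ :=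
  ⨆ s : Set.Icc (0:ℝ) T, |z s|

/-- A functional `h` on paths belongs to the class `𝒜_t` at `c`, with vertical part `dh`
(an atom at `t`) and absolutely continuous part `δh`, if its (Fréchet) derivative at `c`
has the form
`h(c+z) = h(c) + dh ⬝ z_t + ∫_0^t δh(s) z_s ds + o(‖z‖)` as `‖z‖ → 0`. -/
def MemClassA (T t : ℝ) (h : (ℝ → ℝ) → ℝ) (c : ℝ → ℝ) (dh : ℝ) (δh : ℝ → ℝ) : Prop :=
  IntegrableOn δh (Set.Icc 0 t) volume ∧
  ∀ ε > (0:ℝ), ∃ δ > (0:ℝ), ∀ z : ℝ → ℝ, Continuous z →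
    (∀ s ∈ Set.Icc (0:ℝ) T, |z s| ≤ δ) →
    |h (fun s => c s + z s) - h c - (dh * z t + ∫ s in (0:ℝ)..t, δh s * z s)|
      ≤ ε * supNorm T z

/-- The smoothing operator
`(R⁽ⁿ⁾c)_t = e^{-n(T-t)} c_T + n ∫_t^T e^{-n(s-t)} c_s ds`. -/
noncomputable def Rn (T : ℝ) (n : ℕ) (c : ℝ → ℝ) (t : ℝ) : ℝ :=
  Real.exp (-(n : ℝ) * (T - t)) * c T
    + (n : ℝ) * ∫ s in t..T, Real.exp (-(n : ℝ) * (s - t)) * c s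

/-- `g` is Fréchet differentiable at `c` (as a functional on `C[0,T]`) with derivative
the signed measure `μ = μp - μn` (Jordan decomposition into two finite measures):
`g(c+z) = g(c) + ∫_{[0,T]} z dμ + o(‖z‖)` as `‖z‖ → 0`. -/
def FrechetDerivAt (T : ℝ) (g : (ℝ → ℝ) → ℝ) (c : ℝ → ℝ)
    (μp μn : Measure ℝ) : Prop :=
  IsFiniteMeasure μp ∧ IsFiniteMeasure μn ∧
  ∀ ε > (0:ℝ), ∃ δ > (0:ℝ), ∀ z : ℝ → ℝ, Continuous z →
    (∀ s ∈ Set.Icc (0:ℝ) T, |z s| ≤ δ) →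
    |g (fun s => c s + z s) - g c
        - ((∫ s in Set.Icc (0:ℝ) T, z s ∂μp) - ∫ s in Set.Icc (0:ℝ) T, z s ∂μn)|
      ≤ ε * supNorm T z

/-!
`R⁽ⁿ⁾` is a positive linear operator fixing constants, and its kernel at `t` lives on `[t, T]`
at mean distance at most `1/n` from `t`; hence `R⁽ⁿ⁾ c → c` uniformly on `[0, T]`, and
`g (R⁽ⁿ⁾ c) → g c` because a Fréchet differentiable functional is continuous for the sup norm.
Since `R⁽ⁿ⁾` is linear and a sup-norm contraction, the derivative of `g ∘ R⁽ⁿ⁾` at `c` is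
`μ ∘ R⁽ⁿ⁾`, where `μ` is the derivative of `g` at `R⁽ⁿ⁾ c`; by Fubini, `μ ∘ R⁽ⁿ⁾` is an atom at
`T` plus the density `s ↦ ∫_{[0,s)} n e^{-n(s-t)} dμ(t)`.
-/

open Real

lemma ContinuousOn.exists_abs_sub_le_add_mul {f : ℝ → ℝ} {a b : ℝ} (hf : ContinuousOn f (Icc a b))
    {ε : ℝ} (hε : 0 < ε) :
    ∃ K ≥ 0, ∀ x ∈ Icc a b, ∀ y ∈ Icc a b, |f x - f y| ≤ ε + K * |x - y| := by
  obtain ⟨η, hη, hfη⟩ :=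
    Metric.uniformContinuousOn_iff.mp (isCompact_Icc.uniformContinuousOn_of_continuous hf) ε hε
  obtain ⟨C, hC⟩ := isCompact_Icc.exists_bound_of_continuousOn hf
  set M := max C 0
  refine ⟨2 * M / η, by positivity, fun x hx y hy => ?_⟩
  rcases lt_or_ge |x - y| η with hxy | hxy
  · have hfxy := hfη x hx y hy hxy
    rw [Real.dist_eq] at hfxy
    linarith [mul_nonneg (by positivity : 0 ≤ 2 * M / η) (abs_nonneg (x - y))]
  · have h2M : |f x - f y| ≤ 2 * M := by
      have hfx := hC x hx
      have hfy := hC y hy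
      rw [Real.norm_eq_abs] at hfx hfy
      linarith [abs_sub (f x) (f y), le_max_left C 0]
    have : 2 * M ≤ 2 * M / η * |x - y| := by
      rw [div_mul_eq_mul_div, le_div_iff₀ hη]; gcongr
    linarith

lemma mul_integral_exp_neg_mul_sub (a t T : ℝ) :
    a * ∫ s in t..T, exp (-a * (s - t)) = 1 - exp (-a * (T - t)) := by
  have hderiv : ∀ s ∈ uIcc t T,
      HasDerivAt (fun s => -exp (-a * (s - t))) (a * exp (-a * (s - t))) s := by
    intro s _
    exact (((hasDerivAt_id' s).sub_const t).const_mul (-a)).exp.fun_neg.congr_deriv (by ring)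
  rw [← intervalIntegral.integral_const_mul, intervalIntegral.integral_eq_sub_of_hasDerivAt hderiv
    ((by fun_prop : Continuous fun s => a * exp (-a * (s - t))).intervalIntegrable _ _)]
  simp only [sub_self, mul_zero, Real.exp_zero]
  ring

lemma Rn_const (T : ℝ) (n : ℕ) (k t : ℝ) : Rn T n (fun _ => k) t = k := by
  have h := mul_integral_exp_neg_mul_sub n t T
  rw [Rn, intervalIntegral.integral_mul_const]
  linear_combination k * h

lemma natCast_mul_Rn_sub_self (T : ℝ) (n : ℕ) (t : ℝ) :
    n * Rn T n (fun s => s - t) t = 1 - exp (-n * (T - t)) := by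
  have hderiv : ∀ s ∈ uIcc t T, HasDerivAt (fun s => -((n * (s - t) + 1) * exp (-n * (s - t))))
      (n * n * (exp (-n * (s - t)) * (s - t))) s := by
    intro s _
    exact (((((hasDerivAt_id' s).sub_const t).const_mul (n : ℝ)).add_const 1).fun_mul
      (((hasDerivAt_id' s).sub_const t).const_mul (-(n : ℝ))).exp).fun_neg.congr_deriv (by ring)
  have hint := intervalIntegral.integral_eq_sub_of_hasDerivAt hderiv
    (Continuous.intervalIntegrable (by fun_prop) _ _)
  rw [intervalIntegral.integral_const_mul] at hint
  simp only [sub_self, mul_zero, Real.exp_zero] at hint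
  rw [Rn]
  linear_combination hint

section

variable {T : ℝ} {n : ℕ}

lemma Rn_const_mul (k : ℝ) (c : ℝ → ℝ) (t : ℝ) :
    Rn T n (fun s => k * c s) t = k * Rn T n c t := by
  simp only [Rn, mul_left_comm _ k, intervalIntegral.integral_const_mul]
  ring

lemma Rn_add {c z : ℝ → ℝ} (hc : Continuous c) (hz : Continuous z) (t : ℝ) :
    Rn T n (fun s => c s + z s) t = Rn T n c t + Rn T n z t := by
  simp only [Rn, mul_add]
  rw [intervalIntegral.integral_add (Continuous.intervalIntegrable (by fun_prop) _ _)
    (Continuous.intervalIntegrable (by fun_prop) _ _)]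
  ring

lemma Rn_sub_self {c : ℝ → ℝ} (hc : Continuous c) (t : ℝ) :
    Rn T n c t - c t = Rn T n (fun s => c s - c t) t := by
  simp only [sub_eq_add_neg, Rn_add hc continuous_const, Rn_const]

lemma continuous_Rn {c : ℝ → ℝ} (hc : Continuous c) : Continuous (Rn T n c) := by
  have hint : Continuous fun t => ∫ s in T..t, exp (-n * (s - t)) * c s :=
    intervalIntegral.continuous_parametric_intervalIntegral_of_continuous
      (f := fun t s => exp (-n * (s - t)) * c s) (by fun_prop) continuous_id
  have hRn : Rn T n c = fun t => exp (-n * (T - t)) * c T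
      - n * ∫ s in T..t, exp (-n * (s - t)) * c s := by
    ext t; rw [Rn, intervalIntegral.integral_symm t T]; ring
  rw [hRn]
  fun_prop

lemma abs_Rn_le {c φ : ℝ → ℝ} (hφ : Continuous φ) {t : ℝ} (ht : t ≤ T)
    (hcφ : ∀ s ∈ Icc t T, |c s| ≤ φ s) : |Rn T n c t| ≤ Rn T n φ t := by
  have hatom : |exp (-n * (T - t)) * c T| ≤ exp (-n * (T - t)) * φ T := by
    rw [abs_mul, abs_of_pos (exp_pos _)]
    exact mul_le_mul_of_nonneg_left (hcφ T ⟨ht, le_rfl⟩) (exp_pos _).le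
  have hint : |∫ s in t..T, exp (-n * (s - t)) * c s| ≤ ∫ s in t..T, exp (-n * (s - t)) * φ s := by
    rw [← Real.norm_eq_abs]
    have hφint : Continuous fun s => exp (-n * (s - t)) * φ s := by fun_prop
    refine intervalIntegral.norm_integral_le_of_norm_le ht (ae_of_all _ fun s hs => ?_)
      (hφint.intervalIntegrable (μ := volume) _ _)
    rw [Real.norm_eq_abs, abs_mul, abs_of_pos (exp_pos _)]
    exact mul_le_mul_of_nonneg_left (hcφ s (Ioc_subset_Icc_self hs)) (exp_pos _).le
  calc |Rn T n c t|
      ≤ |exp (-n * (T - t)) * c T| + |n * ∫ s in t..T, exp (-n * (s - t)) * c s| :=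
        abs_add_le _ _
    _ ≤ Rn T n φ t := by
        rw [abs_mul (n : ℝ), Nat.abs_cast]
        exact add_le_add hatom (mul_le_mul_of_nonneg_left hint n.cast_nonneg)

lemma abs_Rn_le_of_forall_abs_le {z : ℝ → ℝ} {δ : ℝ} (hz : ∀ s ∈ Icc 0 T, |z s| ≤ δ) {t : ℝ}
    (ht : t ∈ Icc 0 T) : |Rn T n z t| ≤ δ :=
  (abs_Rn_le continuous_const ht.2 fun s hs => hz s ⟨ht.1.trans hs.1, hs.2⟩).trans_eq
    (Rn_const T n δ t)

lemma abs_Rn_sub_self_le {c : ℝ → ℝ} (hc : Continuous c) {ε K t : ℝ} (hK : 0 ≤ K) (ht : t ≤ T)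
    (hcK : ∀ s ∈ Icc t T, |c s - c t| ≤ ε + K * (s - t)) (hn : 0 < n) :
    |Rn T n c t - c t| ≤ ε + K / n := by
  have hn' : (0 : ℝ) < n := Nat.cast_pos.mpr hn
  have hmean : Rn T n (fun s => s - t) t ≤ 1 / n := by
    rw [le_div_iff₀ hn', mul_comm, natCast_mul_Rn_sub_self]
    linarith [exp_pos (-n * (T - t))]
  calc |Rn T n c t - c t|
      ≤ Rn T n (fun s => ε + K * (s - t)) t := by
        rw [Rn_sub_self hc]; exact abs_Rn_le (by fun_prop) ht hcK
    _ = ε + K * Rn T n (fun s => s - t) t := by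
        rw [Rn_add continuous_const (by fun_prop), Rn_const, Rn_const_mul]
    _ ≤ ε + K / n := by
        rw [div_eq_mul_one_div]; gcongr

theorem tendstoUniformlyOn_Rn {c : ℝ → ℝ} (hc : Continuous c) :
    TendstoUniformlyOn (fun n : ℕ => Rn T n c) c atTop (Icc 0 T) := by
  rw [Metric.tendstoUniformlyOn_iff]
  intro ε hε
  obtain ⟨K, hK, hcK⟩ := hc.continuousOn.exists_abs_sub_le_add_mul (a := 0) (b := T) (half_pos hε)
  obtain ⟨N, hN⟩ := exists_nat_gt (2 * K / ε)
  filter_upwards [eventually_gt_atTop N] with n hn t ht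
  have hn' : (0 : ℝ) < n := by exact_mod_cast N.zero_le.trans_lt hn
  have hKn : K / n < ε / 2 := by
    have : 2 * K / ε < n := hN.trans (by exact_mod_cast hn)
    rw [div_lt_iff₀ hε] at this
    rw [div_lt_iff₀ hn']; linarith
  have hcK' : ∀ s ∈ Icc t T, |c s - c t| ≤ ε / 2 + K * (s - t) := fun s hs => by
    simpa [abs_of_nonneg (sub_nonneg.mpr hs.1)] using hcK s ⟨ht.1.trans hs.1, hs.2⟩ t ht
  rw [dist_comm, Real.dist_eq]
  linarith [abs_Rn_sub_self_le hc hK ht.2 hcK' (by exact_mod_cast hn')]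

lemma supNorm_nonneg (T : ℝ) (z : ℝ → ℝ) : 0 ≤ supNorm T z :=
  Real.iSup_nonneg fun _ => abs_nonneg _

lemma le_supNorm {z : ℝ → ℝ} (hz : ContinuousOn z (Icc 0 T)) {s : ℝ} (hs : s ∈ Icc 0 T) :
    |z s| ≤ supNorm T z := by
  obtain ⟨C, hC⟩ := isCompact_Icc.exists_bound_of_continuousOn hz
  exact le_ciSup (f := fun p : Icc (0 : ℝ) T => |z p|) ⟨C, by rintro _ ⟨p, rfl⟩; exact hC p p.2⟩
    ⟨s, hs⟩

lemma supNorm_le {z : ℝ → ℝ} {δ : ℝ} (hδ : 0 ≤ δ) (hz : ∀ s ∈ Icc 0 T, |z s| ≤ δ) :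
    supNorm T z ≤ δ :=
  Real.iSup_le (fun p => hz p p.2) hδ

lemma supNorm_Rn_le {z : ℝ → ℝ} (hz : Continuous z) : supNorm T (Rn T n z) ≤ supNorm T z :=
  supNorm_le (supNorm_nonneg T z) fun _ ht =>
    abs_Rn_le_of_forall_abs_le (fun _ hs => le_supNorm hz.continuousOn hs) ht

theorem FrechetDerivAt.tendsto_of_tendstoUniformlyOn {ι : Type*} {l : Filter ι}
    {g : (ℝ → ℝ) → ℝ} {c : ℝ → ℝ} {μp μn : Measure ℝ} (hg : FrechetDerivAt T g c μp μn)
    {F : ι → ℝ → ℝ} (hF : ∀ i, Continuous (F i)) (hc : Continuous c)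
    (hu : TendstoUniformlyOn F c l (Icc 0 T)) : Tendsto (fun i => g (F i)) l (nhds (g c)) := by
  obtain ⟨hμp, hμn, hlin⟩ := hg
  obtain ⟨δ₀, hδ₀, hδ₀g⟩ := hlin 1 one_pos
  set K := 1 + μp.real (Icc 0 T) + μn.real (Icc 0 T)
  have hK : 0 < K := by positivity
  rw [Metric.tendsto_nhds]
  intro ε hε
  set δ := min δ₀ (ε / (2 * K))
  have hδ : 0 < δ := lt_min hδ₀ (by positivity)
  filter_upwards [Metric.tendstoUniformlyOn_iff.mp hu δ hδ] with i hi
  set z := fun s => F i s - c s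
  have hz : ∀ s ∈ Icc 0 T, |z s| ≤ δ := fun s hs => by
    rw [abs_sub_comm]; exact (hi s hs).le
  have hFi : (fun s => c s + z s) = F i := by ext; simp [z]
  have hrem := hδ₀g z ((hF i).sub hc) fun s hs => (hz s hs).trans (min_le_left _ _)
  rw [hFi] at hrem
  set P := ∫ s in Icc 0 T, z s ∂μp
  set N := ∫ s in Icc 0 T, z s ∂μn
  have hP : |P| ≤ δ * μp.real (Icc 0 T) :=
    norm_setIntegral_le_of_norm_le_const (f := z) (measure_lt_top _ _) hz
  have hN : |N| ≤ δ * μn.real (Icc 0 T) :=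
    norm_setIntegral_le_of_norm_le_const (f := z) (measure_lt_top _ _) hz
  have hsup : supNorm T z ≤ δ := supNorm_le hδ.le hz
  have hKδ : K * δ ≤ ε / 2 := by
    rw [← le_div_iff₀' hK, div_div]; exact min_le_right _ _
  rw [Real.dist_eq]
  calc |g (F i) - g c| = |(g (F i) - g c - (P - N)) + P + -N| := by ring_nf
    _ ≤ |g (F i) - g c - (P - N)| + |P| + |-N| := abs_add_three _ _ _
    _ ≤ K * δ := by rw [abs_neg]; linarith
    _ < ε := by linarith

noncomputable def RnKernel (n : ℕ) (t s : ℝ) : ℝ :=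
  if t < s then n * exp (-n * (s - t)) else 0

lemma measurable_RnKernel : Measurable (Function.uncurry (RnKernel n)) :=
  Measurable.ite (measurableSet_lt measurable_fst measurable_snd) (by fun_prop) measurable_const

lemma abs_RnKernel_le (t s : ℝ) : |RnKernel n t s| ≤ n := by
  unfold RnKernel
  split_ifs with h
  · rw [abs_of_nonneg (by positivity)]
    have : -(n : ℝ) * (s - t) ≤ 0 := by nlinarith [n.cast_nonneg (α := ℝ)]
    exact mul_le_of_le_one_right n.cast_nonneg (exp_le_one_iff.mpr this)
  · simp

lemma Rn_eq_add_integral_RnKernel (z : ℝ → ℝ) {t : ℝ} (ht : t ∈ Icc 0 T) :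
    Rn T n z t = exp (-n * (T - t)) * z T + ∫ s in Ioc 0 T, RnKernel n t s * z s := by
  have hIoc : Ioc 0 T ∩ Ioi t = Ioc t T := by
    ext s; simp only [mem_inter_iff, mem_Ioc, mem_Ioi]
    constructor
    · rintro ⟨⟨-, hsT⟩, hts⟩; exact ⟨hts, hsT⟩
    · rintro ⟨hts, hsT⟩; exact ⟨⟨ht.1.trans_lt hts, hsT⟩, hts⟩
  have hker : (fun s => RnKernel n t s * z s)
      = (Ioi t).indicator fun s => n * (exp (-n * (s - t)) * z s) := by
    ext s; by_cases hts : t < s <;> simp [RnKernel, hts, mul_assoc]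
  rw [Rn, hker, setIntegral_indicator measurableSet_Ioi, hIoc, integral_const_mul,
    intervalIntegral.integral_of_le ht.2]

lemma integrable_RnKernel_mul (ν : Measure ℝ) [IsFiniteMeasure ν] {z : ℝ → ℝ}
    (hz : Continuous z) :
    Integrable (fun p : ℝ × ℝ => RnKernel n p.1 p.2 * z p.2)
      (ν.prod (volume.restrict (Ioc 0 T))) := by
  obtain ⟨M, hM⟩ := (isCompact_Icc (a := 0) (b := T)).exists_bound_of_continuousOn hz.continuousOn
  have hbound : ∀ᵐ s ∂volume.restrict (Ioc 0 T), ∀ t, ‖RnKernel n t s * z s‖ ≤ n * M := by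
    filter_upwards [ae_restrict_mem measurableSet_Ioc] with s hs t
    rw [norm_mul, Real.norm_eq_abs]
    exact mul_le_mul (abs_RnKernel_le _ _) (hM s (Ioc_subset_Icc_self hs)) (norm_nonneg _)
      n.cast_nonneg
  exact Integrable.of_bound
    (measurable_RnKernel.mul (hz.measurable.comp measurable_snd)).aestronglyMeasurable (n * M)
    ((Measure.quasiMeasurePreserving_snd.ae hbound).mono fun p hp => hp p.1)

lemma integral_integral_RnKernel_mul_swap (ν : Measure ℝ) [IsFiniteMeasure ν] {z : ℝ → ℝ}
    (hz : Continuous z) :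
    ∫ t, (∫ s in Ioc 0 T, RnKernel n t s * z s) ∂ν
      = ∫ s in Ioc 0 T, (∫ t, RnKernel n t s ∂ν) * z s := by
  simp_rw [← integral_mul_const]
  exact integral_integral_swap (integrable_RnKernel_mul ν hz)

noncomputable def RnAdjointAtom (T : ℝ) (n : ℕ) (μ : Measure ℝ) : ℝ :=
  ∫ t in Icc 0 T, exp (-n * (T - t)) ∂μ

noncomputable def RnAdjointDensity (T : ℝ) (n : ℕ) (μ : Measure ℝ) (s : ℝ) : ℝ :=
  ∫ t in Icc 0 T, RnKernel n t s ∂μ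

section FiniteMeasure

variable (μ : Measure ℝ) [IsFiniteMeasure μ]

lemma intervalIntegrable_RnAdjointDensity_mul (hT : 0 ≤ T) {z : ℝ → ℝ} (hz : Continuous z) :
    IntervalIntegrable (fun s => RnAdjointDensity T n μ s * z s) volume 0 T := by
  rw [intervalIntegrable_iff_integrableOn_Ioc_of_le hT, IntegrableOn]
  simpa only [RnAdjointDensity, integral_mul_const] using
    (integrable_RnKernel_mul (μ.restrict (Icc 0 T)) hz).integral_prod_right

lemma integrableOn_RnAdjointDensity (hT : 0 ≤ T) :
    IntegrableOn (RnAdjointDensity T n μ) (Icc 0 T) := by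
  rw [← intervalIntegrable_iff_integrableOn_Icc_of_le hT]
  simpa using intervalIntegrable_RnAdjointDensity_mul μ hT continuous_const (n := n) (z := 1)

theorem setIntegral_Rn (hT : 0 ≤ T) {z : ℝ → ℝ} (hz : Continuous z) :
    ∫ t in Icc 0 T, Rn T n z t ∂μ
      = RnAdjointAtom T n μ * z T + ∫ s in 0..T, RnAdjointDensity T n μ s * z s := by
  have hatom : IntegrableOn (fun t => exp (-n * (T - t)) * z T) (Icc 0 T) μ :=
    (by fun_prop : Continuous fun t => exp (-n * (T - t)) * z T).integrableOn_Icc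
  rw [setIntegral_congr_fun measurableSet_Icc fun t ht => Rn_eq_add_integral_RnKernel z ht,
    integral_add hatom (integrable_RnKernel_mul _ hz).integral_prod_left, integral_mul_const,
    integral_integral_RnKernel_mul_swap _ hz, intervalIntegral.integral_of_le hT]
  rfl

end FiniteMeasure

theorem FrechetDerivAt.memClassA_comp_Rn (hT : 0 ≤ T) {g : (ℝ → ℝ) → ℝ} {c : ℝ → ℝ}
    {μp μn : Measure ℝ} (hg : FrechetDerivAt T g (Rn T n c) μp μn) (hc : Continuous c) :
    MemClassA T T (fun x => g (Rn T n x)) c (RnAdjointAtom T n μp - RnAdjointAtom T n μn)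
      (fun s => RnAdjointDensity T n μp s - RnAdjointDensity T n μn s) := by
  obtain ⟨hμp, hμn, hlin⟩ := hg
  refine ⟨(integrableOn_RnAdjointDensity μp hT).sub (integrableOn_RnAdjointDensity μn hT),
    fun ε hε => ?_⟩
  obtain ⟨δ, hδ, hδg⟩ := hlin ε hε
  refine ⟨δ, hδ, fun z hz hzδ => ?_⟩
  have hrem := hδg (Rn T n z) (continuous_Rn hz) fun t ht => abs_Rn_le_of_forall_abs_le hzδ ht
  have hsum : (fun s => Rn T n c s + Rn T n z s) = Rn T n (fun s => c s + z s) :=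
    funext fun s => (Rn_add hc hz s).symm
  rw [hsum, setIntegral_Rn μp hT hz, setIntegral_Rn μn hT hz] at hrem
  beta_reduce
  simp_rw [sub_mul]
  rw [intervalIntegral.integral_sub (intervalIntegrable_RnAdjointDensity_mul μp hT hz)
    (intervalIntegrable_RnAdjointDensity_mul μn hT hz)]
  calc _ = _ := by congr 1; ring
    _ ≤ ε * supNorm T (Rn T n z) := hrem
    _ ≤ ε * supNorm T z := mul_le_mul_of_nonneg_left (supNorm_Rn_le hz) hε.le

end

/-- Every Fréchet differentiable functional `g : C[0,T] → ℝ` is a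
pointwise limit of functionals of class `𝒜_T`: the functionals `g⁽ⁿ⁾(c) = g(R⁽ⁿ⁾c)`
belong to `𝒜_T` (at every continuous `c`) and `g⁽ⁿ⁾(c) → g(c)` for every
`c ∈ C[0,T]`. -/
theorem classA_functionals_dense
    (T : ℝ) (hT : 0 < T) (g : (ℝ → ℝ) → ℝ)
    (hg : ∀ c : ℝ → ℝ, Continuous c → ∃ μp μn : Measure ℝ, FrechetDerivAt T g c μp μn) :
    ∀ c : ℝ → ℝ, Continuous c →
      Filter.Tendsto (fun n : ℕ => g fun u => Rn T n c u) Filter.atTop (nhds (g c))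
      ∧ ∀ n : ℕ, ∃ (d : ℝ) (δf : ℝ → ℝ),
          MemClassA T T (fun x => g fun u => Rn T n x u) c d δf := by
  intro c hc
  refine ⟨?_, fun n => ?_⟩
  · obtain ⟨μp, μn, hgc⟩ := hg c hc
    exact hgc.tendsto_of_tendstoUniformlyOn (fun _ => continuous_Rn hc) hc
      (tendstoUniformlyOn_Rn hc)
  · obtain ⟨μp, μn, hgRc⟩ := hg (Rn T n c) (continuous_Rn hc)
    exact ⟨_, _, hgRc.memClassA_comp_Rn hT.le hc⟩
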